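/- arXiv:1207.4079 — 2 statements merged into one kernel-verified Lean document; each statement's English description precedes it below -/
import Mathlib

section
/- Majority argument for consistent labeling across highly connected stains: let G be a graph with Node Unique Label Cover constraints admitting no (q,2k)-good node separation (with V∞ = ∅), and let C₁, C₂ be vertex sets of two disjoint connected subgraphs of G, each of size more than q, inducing connected subgraphs. Let X ⊆ V(G), |X| ≤ k, with X ∩ (C₁ ∪ C₂) = ∅, and let Ψ be a labeling of G \ X. Then for any choice of 2k+1 paths P⁰, ..., P^{2k} from C₁ to C₂ with pairwise disjoint internal vertex sets (which exist by Menger's theorem), at least k+1 of the paths avoid X, and for each such path P^i with endpoints v^i₁ ∈ C₁, v^i₂ ∈ C₂, the value Ψ(v^i₂) is determined from Ψ(v^i₁) by composing the edge constraints along P^i; in particular the labeling Ψ|_{C₂} is the unique labeling of C₂ that is determined, via the composed edge constraints along P^i, from Ψ|_{C₁} for a majority (at least k+1) of the 2k+1 paths. -/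
variable {V σ : Type*}

/-- A binary relation `ψ` on an alphabet is a *partial permutation* if every element has
at most one image and at most one preimage. -/
def IsPartialPerm (ψ : σ → σ → Prop) : Prop :=
  (∀ a b c : σ, ψ a b → ψ a c → b = c) ∧ (∀ a b c : σ, ψ a c → ψ b c → a = b)

/-- `Ψ` is a labeling of the set `S`: it satisfies all vertex constraints `φ` on `S`
and all edge constraints `ψ` inside `G[S]`. -/
def LabelsOn (G : SimpleGraph V) (φ : V → Set σ)
    (ψ : V → V → σ → σ → Prop) (S : Set V) (Ψ : V → σ) : Prop :=
  (∀ w ∈ S, Ψ w ∈ φ w) ∧ ∀ u ∈ S, ∀ w ∈ S, G.Adj u w → ψ u w (Ψ u) (Ψ w)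

/-- The vertex sets of the connected components of `G \ Z`. -/
def comps (G : SimpleGraph V) (Z : Set V) : Set (Set V) :=
  {C | ∃ D : (G.induce Zᶜ).ConnectedComponent, C = Subtype.val '' D.supp}

/-- A `(q,k)`-good node separation of `G` with undeletable vertices `Vinf`. -/
def GoodNodeSeparation (G : SimpleGraph V) (Vinf : Set V) (q k : ℕ)
    (Z V₁ V₂ : Set V) : Prop :=
  Z.ncard ≤ k ∧ Z ∩ Vinf = ∅ ∧
  V₁ ∈ comps G Z ∧ V₂ ∈ comps G Z ∧ V₁ ≠ V₂ ∧
  q < (V₁ \ Vinf).ncard ∧ q < (V₂ \ Vinf).ncard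

/-- The composition of the edge constraints `ψ` along a walk `p`: `walkRel ψ p a c`
holds when the label `a` at the start of `p` can be propagated along the consecutive
edges of `p`, ending with the label `c`. -/
def walkRel {G : SimpleGraph V} (ψ : V → V → σ → σ → Prop)
    {u w : V} (p : G.Walk u w) (a c : σ) : Prop :=
  ∃ f : ℕ → σ, f 0 = a ∧ f p.length = c ∧
    ∀ i < p.length, ψ (p.getVert i) (p.getVert (i + 1)) (f i) (f (i + 1))

lemma getVert_mem_support' {G : SimpleGraph V} {u v : V} (p : G.Walk u v) (i : ℕ) :
    p.getVert i ∈ p.support := by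
  induction p generalizing i with
  | nil => simp [SimpleGraph.Walk.getVert]
  | cons h p ih =>
    cases i with
    | zero => simp [SimpleGraph.Walk.getVert]
    | succ n =>
      rw [SimpleGraph.Walk.support_cons]
      exact List.mem_cons_of_mem _ (ih n)

lemma eq_on_walk {G : SimpleGraph V} {ψ : V → V → σ → σ → Prop}
    (hpp : ∀ u w, G.Adj u w → IsPartialPerm (ψ u w))
    {S : Set V} {Ψ Ψ' : V → σ}
    (h1 : ∀ u ∈ S, ∀ w ∈ S, G.Adj u w → ψ u w (Ψ u) (Ψ w))
    (h2 : ∀ u ∈ S, ∀ w ∈ S, G.Adj u w → ψ u w (Ψ' u) (Ψ' w))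
    {u w : S} (p : (G.induce S).Walk u w) (h : Ψ' u = Ψ u) : Ψ' w = Ψ w := by
  induction p with
  | nil => exact h
  | @cons u v w hadj p ih =>
    have hadj' : G.Adj u.val v.val := hadj
    have hψ := h1 u.val u.2 v.val v.2 hadj'
    have hψ' := h2 u.val u.2 v.val v.2 hadj'
    rw [← h] at hψ
    exact ih ((hpp _ _ hadj').1 _ _ _ hψ' hψ)

/-- Majority argument for consistent labeling across highly connected stains:
given two disjoint large connected stains `C₁, C₂` in a graph with no `(q,2k)`-good node
separation, a deletion set `X` of size at most `k` avoiding them, a labeling `Ψ` of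
`G \ X`, and `2k+1` internally vertex-disjoint paths from `C₁` to `C₂`: at least `k+1`
of the paths avoid `X`; along every path avoiding `X` the label of its `C₂`-endpoint
is determined from the label of its `C₁`-endpoint by the composed constraints; and
`Ψ|C₂` is the unique labeling of `C₂` consistent, via the composed constraints from
`Ψ|C₁`, with a majority (at least `k+1`) of the paths. -/
theorem majority_labeling [Fintype V] [Fintype σ] (G : SimpleGraph V)
    (φ : V → Set σ) (ψ : V → V → σ → σ → Prop)
    (hsymm : ∀ u w a b, ψ u w a b ↔ ψ w u b a)
    (hpp : ∀ u w, G.Adj u w → IsPartialPerm (ψ u w))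
    (q k : ℕ)
    (hns : ¬ ∃ Z V₁ V₂ : Set V, GoodNodeSeparation G (∅ : Set V) q (2 * k) Z V₁ V₂)
    (C₁ C₂ : Set V) (hdisj : Disjoint C₁ C₂)
    (hC₁ : q < C₁.ncard) (hC₂ : q < C₂.ncard)
    (hC₁conn : (G.induce C₁).Connected) (hC₂conn : (G.induce C₂).Connected)
    (X : Set V) (hXk : X.ncard ≤ k) (hXC : X ∩ (C₁ ∪ C₂) = ∅)
    (Ψ : V → σ) (hΨ : LabelsOn G φ ψ Xᶜ Ψ)
    (a b : Fin (2 * k + 1) → V) (ha : ∀ i, a i ∈ C₁) (hb : ∀ i, b i ∈ C₂)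
    (P : (i : Fin (2 * k + 1)) → G.Walk (a i) (b i))
    (hpath : ∀ i, (P i).IsPath)
    (hint : ∀ i j, i ≠ j → ∀ x, x ∈ (P i).support → x ≠ a i → x ≠ b i →
      x ∈ (P j).support → x = a j ∨ x = b j) :
    (k + 1 ≤ {i : Fin (2 * k + 1) | ∀ x ∈ (P i).support, x ∉ X}.ncard) ∧
    (∀ i, (∀ x ∈ (P i).support, x ∉ X) →
      walkRel ψ (P i) (Ψ (a i)) (Ψ (b i)) ∧
      ∀ β : σ, walkRel ψ (P i) (Ψ (a i)) β → β = Ψ (b i)) ∧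
    (∀ Ψ' : V → σ, LabelsOn G φ ψ C₂ Ψ' →
      k + 1 ≤ {i : Fin (2 * k + 1) | walkRel ψ (P i) (Ψ (a i)) (Ψ' (b i))}.ncard →
      Set.EqOn Ψ' Ψ C₂) := by
  classical
  have hXnC : ∀ x ∈ X, x ∉ C₁ ∧ x ∉ C₂ := by
    intro x hx
    constructor <;> intro hc <;>
      exact Set.eq_empty_iff_forall_notMem.mp hXC x ⟨hx, by simp [hc]⟩
  -- Part 1
  set Good : Set (Fin (2 * k + 1)) := {i | ∀ x ∈ (P i).support, x ∉ X} with hGood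
  have part1 : k + 1 ≤ Good.ncard := by
    have hB : Goodᶜ.ncard ≤ k := by
      refine le_trans ?_ hXk
      have hmem : ∀ i ∈ Goodᶜ, ∃ x, x ∈ (P i).support ∧ x ∈ X := by
        intro i hi
        simp only [hGood, Set.mem_compl_iff, Set.mem_setOf_eq] at hi
        push_neg at hi
        exact hi
      set f : Fin (2 * k + 1) → V := fun i =>
        if h : ∃ x, x ∈ (P i).support ∧ x ∈ X then h.choose else a 0 with hf
      refine Set.ncard_le_ncard_of_injOn f ?_ ?_ (Set.toFinite X)
      · intro i hi
        have h := hmem i hi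
        simp only [hf, dif_pos h]
        exact h.choose_spec.2
      · intro i hi j hj hij
        by_contra hne
        have hi' := hmem i hi
        have hj' := hmem j hj
        simp only [hf, dif_pos hi', dif_pos hj'] at hij
        have hxX : hi'.choose ∈ X := hi'.choose_spec.2
        have hxs : hi'.choose ∈ (P i).support := hi'.choose_spec.1
        have hxj : hi'.choose ∈ (P j).support := hij ▸ hj'.choose_spec.1
        have h1 := hint i j hne hi'.choose hxs
          (fun h => (hXnC _ hxX).1 (h.symm ▸ ha i))
          (fun h => (hXnC _ hxX).2 (h.symm ▸ hb i)) hxj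
        rcases h1 with h | h
        · exact (hXnC _ hxX).1 (h.symm ▸ ha j)
        · exact (hXnC _ hxX).2 (h.symm ▸ hb j)
    have htot : Good.ncard + Goodᶜ.ncard = 2 * k + 1 := by
      rw [Set.ncard_add_ncard_compl]
      simp
    omega
  -- Part 2
  have part2 : ∀ i, (∀ x ∈ (P i).support, x ∉ X) →
      walkRel ψ (P i) (Ψ (a i)) (Ψ (b i)) ∧
      ∀ β : σ, walkRel ψ (P i) (Ψ (a i)) β → β = Ψ (b i) := by
    intro i hi
    have hstep : ∀ j < (P i).length,
        ψ ((P i).getVert j) ((P i).getVert (j + 1)) (Ψ ((P i).getVert j))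
          (Ψ ((P i).getVert (j + 1))) := by
      intro j hj
      exact hΨ.2 _ (hi _ (getVert_mem_support' _ j))
        _ (hi _ (getVert_mem_support' _ (j + 1))) ((P i).adj_getVert_succ hj)
    constructor
    · refine ⟨fun j => Ψ ((P i).getVert j), by simp, by simp, hstep⟩
    · rintro β ⟨f, h0, hl, hf⟩
      have key : ∀ j ≤ (P i).length, f j = Ψ ((P i).getVert j) := by
        intro j hj
        induction j with
        | zero => simp [h0]
        | succ n ih =>
          have hn : n < (P i).length := by omega
          have ihn := ih (by omega)
          have h2 := hf n hn
          rw [ihn] at h2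
          exact (hpp _ _ ((P i).adj_getVert_succ hn)).1 _ _ _ h2 (hstep n hn)
      have := key (P i).length le_rfl
      rw [hl, SimpleGraph.Walk.getVert_length] at this
      exact this
  refine ⟨part1, part2, ?_⟩
  -- Part 3
  intro Ψ' hΨ' hcard
  set Agr : Set (Fin (2 * k + 1)) :=
    {i | walkRel ψ (P i) (Ψ (a i)) (Ψ' (b i))} with hAgr
  -- Good and Agr intersect
  have hinter : (Good ∩ Agr).Nonempty := by
    rw [Set.nonempty_iff_ne_empty]
    intro hemp
    have := Set.ncard_inter_add_ncard_union Good Agr (Set.toFinite _) (Set.toFinite _)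
    have hle : (Good ∪ Agr).ncard ≤ 2 * k + 1 := by
      have := Set.ncard_le_ncard (Set.subset_univ (Good ∪ Agr)) (Set.toFinite _)
      simpa [Set.ncard_univ] using this
    rw [hemp] at this
    simp at this
    omega
  obtain ⟨i, hiG, hiA⟩ := hinter
  have hbeq : Ψ' (b i) = Ψ (b i) := (part2 i hiG).2 _ hiA
  -- propagate over C₂
  have hC₂X : ∀ x ∈ C₂, x ∈ Xᶜ := fun x hx hxX => (hXnC x hxX).2 hx
  have h1 : ∀ u ∈ C₂, ∀ w ∈ C₂, G.Adj u w → ψ u w (Ψ u) (Ψ w) := by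
    intro u hu w hw hadj
    exact hΨ.2 u (hC₂X u hu) w (hC₂X w hw) hadj
  intro x hx
  obtain ⟨p⟩ := hC₂conn ⟨b i, hb i⟩ ⟨x, hx⟩
  exact eq_on_walk hpp h1 hΨ'.2 p hbeq
end

section
/- Component dichotomy after contraction to a core (Steiner Cut high-connectivity phase): let H be a connected multigraph with a distinguished vertex b (the core) obtained from a graph G by contracting an edge set S and identifying all heavy vertices (those onto which more than q vertices were contracted) into b. Let X₀ ⊆ E(H) be a minimum-size solution surviving the contraction such that S interrogates X₀, meaning: X₀ ∩ S = ∅; each connected component of G \ X₀ other than the unique component C₀ of more than q vertices has all its vertices contracted to a single vertex of H; and every endpoint in C₀ of an edge of X₀ is contracted onto b. Let B₁', ..., B_p' be the connected components of H \ {b} and B_i the subgraph induced by V(B_i') ∪ {b}. Then for each i, either E(B_i) ∩ X₀ = ∅ or E(B_i) ⊆ X₀. -/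
variable {V W : Type*}

/-- The graph on `W` induced by a contraction map `ι : V → W` from `G`: two distinct
vertices of `W` are adjacent when some edge of `G` joins their preimages. -/
def contractedGraph (G : SimpleGraph V) (ι : V → W) : SimpleGraph W where
  Adj x y := x ≠ y ∧ ∃ u v : V, ι u = x ∧ ι v = y ∧ G.Adj u v
  symm := ⟨by
    rintro x y ⟨hxy, u, v, hu, hv, huv⟩
    exact ⟨hxy.symm, v, u, hv, hu, huv.symm⟩⟩
  loopless := ⟨fun x h => h.1 rfl⟩

/-- The graph `G` with the vertex set `X` (effectively) removed. -/
def delV {V : Type*} (G : SimpleGraph V) (X : Set V) : SimpleGraph V where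
  Adj u w := G.Adj u w ∧ u ∉ X ∧ w ∉ X
  symm := ⟨by rintro u w ⟨h, hu, hw⟩; exact ⟨h.symm, hw, hu⟩⟩
  loopless := ⟨by rintro u ⟨h, -, -⟩; exact G.loopless.irrefl u h⟩

/-- The edges of `G` that survive the contraction `ι` and lie, in the contracted
graph, inside the set `C` of vertices together with the core `b`. -/
def edgesOf (G : SimpleGraph V) (ι : V → W) (b : W) (C : Set W) : Set (Sym2 V) :=
  {e : Sym2 V | ∃ u v : V, e = s(u, v) ∧ G.Adj u v ∧ ι u ≠ ι v ∧
    ι u ∈ insert b C ∧ ι v ∈ insert b C}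

/-!
Call a vertex `w` of `H` big if its fiber meets `C₀`; since fibers lie inside single
components of `G \ X₀`, the fiber of a big vertex lies entirely in `C₀`. Bigness
propagates along the edges of `H \ {b}`: an edge of `G` leaving `C₀` from a vertex
not contracted onto `b` cannot lie in `X₀`, so it stays inside `C₀`. Hence within one
block every non-core vertex is big or every one is small. An edge of `X₀` in the block
has an endpoint outside `C₀` (both endpoints in `C₀` would be contracted onto `b`), giving
a small vertex; an edge of the block outside `X₀` joins two vertices of one component of
`G \ X₀` with distinct images, which forces that component to be `C₀`, giving a big vertex.
-/

namespace SimpleGraph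

theorem Reachable.mem_of_adj_closed {G : SimpleGraph V} {s : Set V}
    (hs : ∀ ⦃u v⦄, G.Adj u v → u ∈ s → v ∈ s) {u v : V} (h : G.Reachable u v) (hu : u ∈ s) :
    v ∈ s := by
  obtain ⟨p⟩ := h
  induction p with
  | nil => exact hu
  | cons hadj _ ih => exact ih (hs hadj hu)

theorem ConnectedComponent.mem_supp_of_reachable {G : SimpleGraph V} (C : G.ConnectedComponent)
    {u v : V} (h : G.Reachable u v) (hu : u ∈ C.supp) : v ∈ C.supp :=
  h.mem_of_adj_closed (fun _ _ hadj hu => C.mem_supp_of_adj_mem_supp hu hadj) hu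

end SimpleGraph

open SimpleGraph

section Block

variable {G : SimpleGraph V} {ι : V → W} {b : W} {X₀ : Set (Sym2 V)}
  {C₀ : (G.deleteEdges X₀).ConnectedComponent}

theorem mem_supp_of_image_mem
    (hfiber : ∀ u v : V, ι u = ι v → (G.deleteEdges X₀).Reachable u v)
    {u : V} (hu : ι u ∈ ι '' C₀.supp) : u ∈ C₀.supp := by
  obtain ⟨z, hz, hzu⟩ := hu
  exact C₀.mem_supp_of_reachable (hfiber z u hzu) hz

theorem image_mem_of_adj_delV
    (hcore : ∀ u v : V, s(u, v) ∈ X₀ → u ∈ C₀.supp → ι u = b)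
    (hfiber : ∀ u v : V, ι u = ι v → (G.deleteEdges X₀).Reachable u v)
    {w₁ w₂ : W} (hadj : (delV (contractedGraph G ι) {b}).Adj w₁ w₂)
    (hw₁ : w₁ ∈ ι '' C₀.supp) : w₂ ∈ ι '' C₀.supp := by
  obtain ⟨⟨-, u, v, rfl, rfl, huv⟩, hub, -⟩ := hadj
  have huC : u ∈ C₀.supp := mem_supp_of_image_mem hfiber hw₁
  have hX : s(u, v) ∉ X₀ := fun hX => hub (hcore u v hX huC)
  exact ⟨v, C₀.mem_supp_of_adj_mem_supp huC (deleteEdges_adj.mpr ⟨huv, hX⟩), rfl⟩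

theorem exists_notMem_image_of_mem
    (hcore : ∀ u v : V, s(u, v) ∈ X₀ → u ∈ C₀.supp → ι u = b)
    (hfiber : ∀ u v : V, ι u = ι v → (G.deleteEdges X₀).Reachable u v)
    (hbfiber : ι ⁻¹' {b} ⊆ C₀.supp) {C : Set W} {e : Sym2 V}
    (he : e ∈ edgesOf G ι b C) (heX : e ∈ X₀) :
    ∃ w ∈ C, w ∉ ι '' C₀.supp := by
  obtain ⟨u, v, rfl, -, hne, hu, hv⟩ := he
  have small {x : V} (hx : x ∉ C₀.supp) (hxC : ι x ∈ insert b C) :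
      ∃ w ∈ C, w ∉ ι '' C₀.supp :=
    ⟨ι x, Set.mem_of_mem_insert_of_ne hxC fun h => hx (hbfiber h),
      fun h => hx (mem_supp_of_image_mem hfiber h)⟩
  by_cases huC : u ∈ C₀.supp
  · refine small (fun hvC => hne ?_) hv
    rw [hcore u v heX huC, hcore v u (Sym2.eq_swap ▸ heX) hvC]
  · exact small huC hu

theorem exists_mem_image_of_notMem
    (hsmall : ∀ C : (G.deleteEdges X₀).ConnectedComponent, C ≠ C₀ →
      ∀ u ∈ C.supp, ∀ v ∈ C.supp, ι u = ι v)
    {C : Set W} {e : Sym2 V} (he : e ∈ edgesOf G ι b C) (heX : e ∉ X₀) :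
    ∃ w ∈ C, w ∈ ι '' C₀.supp := by
  obtain ⟨u, v, rfl, hadj, hne, hu, hv⟩ := he
  have hadj' : (G.deleteEdges X₀).Adj u v := deleteEdges_adj.mpr ⟨hadj, heX⟩
  have huC : u ∈ C₀.supp := by
    by_contra huC
    exact hne (hsmall _ huC u rfl v
      (ConnectedComponent.connectedComponentMk_eq_of_adj hadj').symm)
  have hvC : v ∈ C₀.supp := C₀.mem_supp_of_adj_mem_supp huC hadj'
  by_cases hub : ι u = b
  · exact ⟨ι v, Set.mem_of_mem_insert_of_ne hv (hub ▸ hne.symm), v, hvC, rfl⟩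
  · exact ⟨ι u, Set.mem_of_mem_insert_of_ne hu hub, u, huC, rfl⟩

end Block

theorem block_full_or_empty_general
    (G : SimpleGraph V) (ι : V → W) (b : W) (X₀ : Set (Sym2 V))
    (C₀ : (G.deleteEdges X₀).ConnectedComponent)
    (hsmall : ∀ C : (G.deleteEdges X₀).ConnectedComponent, C ≠ C₀ →
      ∀ u ∈ C.supp, ∀ v ∈ C.supp, ι u = ι v)
    (hcore : ∀ u v : V, s(u, v) ∈ X₀ → u ∈ C₀.supp → ι u = b)
    (hfiber : ∀ u v : V, ι u = ι v → (G.deleteEdges X₀).Reachable u v)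
    (hbfiber : (ι ⁻¹' {b}).Nonempty ∧ ι ⁻¹' {b} ⊆ C₀.supp) :
    ∀ C : (delV (contractedGraph G ι) {b}).ConnectedComponent,
      edgesOf G ι b C.supp ∩ X₀ = ∅ ∨ edgesOf G ι b C.supp ⊆ X₀ := by
  intro C
  refine or_iff_not_imp_left.mpr fun hmeet e he => by_contra fun heX => ?_
  obtain ⟨e₀, he₀, he₀X⟩ := Set.nonempty_iff_ne_empty.mpr hmeet
  obtain ⟨w, hw, hwsmall⟩ := exists_notMem_image_of_mem hcore hfiber hbfiber.2 he₀ he₀X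
  obtain ⟨x, hx, hxbig⟩ := exists_mem_image_of_notMem hsmall he heX
  exact hwsmall <| (C.reachable_of_mem_supp hx hw).mem_of_adj_closed
    (fun _ _ hadj => image_mem_of_adj_delV hcore hfiber hadj) hxbig

/-- Component dichotomy after contraction to a core (Steiner Cut, high connectivity
phase): let `H` be the contracted graph of `G` under `ι` with core vertex `b`, where
the minimum solution `X₀` (at most `k` edges, disjoint from the contracted set `S`,
its edges joining different components of `G \ X₀`) leaves a unique big component `C₀`
(more than `q` vertices, all others at most `q`), every small component of `G \ X₀` is
contracted to a single vertex, every endpoint in `C₀` of an edge of `X₀` is contracted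
onto `b`, fibers of `ι` lie inside single components of `G \ X₀`, heavy vertices (fibers
of more than `q` vertices) are exactly `b`, and the fiber of `b` is a nonempty subset of
`C₀`. Then for every connected component `C` of `H \ {b}`, the edge set of the block
`B = C ∪ {b}` is either disjoint from `X₀` or entirely contained in `X₀`. -/
theorem block_full_or_empty [Fintype V] [Fintype W]
    (G : SimpleGraph V) (hG : G.Connected) (q k : ℕ)
    (ι : V → W) (hsurj : Function.Surjective ι) (b : W)
    (hHconn : (contractedGraph G ι).Connected)
    (S X₀ : Set (Sym2 V))
    (hSsub : S ⊆ G.edgeSet) (hX₀sub : X₀ ⊆ G.edgeSet)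
    (hX₀k : X₀.ncard ≤ k) (hdisjSX : Disjoint X₀ S)
    (C₀ : (G.deleteEdges X₀).ConnectedComponent)
    (hbig : q < C₀.supp.ncard)
    (hsmallcard : ∀ C : (G.deleteEdges X₀).ConnectedComponent,
      C ≠ C₀ → C.supp.ncard ≤ q)
    (hsmall : ∀ C : (G.deleteEdges X₀).ConnectedComponent, C ≠ C₀ →
      ∀ u ∈ C.supp, ∀ v ∈ C.supp, ι u = ι v)
    (hcore : ∀ u v : V, s(u, v) ∈ X₀ → u ∈ C₀.supp → ι u = b)
    (hfiber : ∀ u v : V, ι u = ι v → (G.deleteEdges X₀).Reachable u v)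
    (hheavy : ∀ x : W, q < (ι ⁻¹' {x}).ncard → x = b)
    (hbfiber : (ι ⁻¹' {b}).Nonempty ∧ ι ⁻¹' {b} ⊆ C₀.supp)
    (hmin : ∀ u v : V, s(u, v) ∈ X₀ → ¬ (G.deleteEdges X₀).Reachable u v) :
    ∀ C : (delV (contractedGraph G ι) {b}).ConnectedComponent,
      edgesOf G ι b C.supp ∩ X₀ = ∅ ∨ edgesOf G ι b C.supp ⊆ X₀ :=
  block_full_or_empty_general G ι b X₀ C₀ hsmall hcore hfiber hbfiber
end
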